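/- Every odd-dimensional discrete manifold has zero Euler characteristic: if d is odd and G is a d-manifold, then χ(G) = 0. -/

import Mathlib

/-!
A unit ball `B(x)` is a cone over any vertex of `x`, so `χ(B(x)) = 1` and hence
`χ(U(x)) = 1 - χ(S(x))`. Splitting `G = (G \ U(x)) ∪ U(x)` then shows that contractible complexes
have `χ = 1`, and, by mutual induction, that a `d`-sphere has `χ = 1 + (-1)^d` while every star of
a `d`-manifold has `χ(U(x)) = (-1)^d`. Summing `w(x) χ(U(x))` over `x` counts the pairs `x ⊆ y`;
grouped by `y` it is `χ(G)`, because the faces of `y` form a cone. So `χ(G) = (-1)^d χ(G)` in a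
`d`-manifold, and `χ(G) = 0` when `d` is odd.
-/

open Finset Polynomial

namespace SphereFormula

variable {V : Type} [DecidableEq V]

/-- A finite abstract simplicial complex: a finite collection of nonempty finite sets
that is closed under taking nonempty subsets. -/
def IsComplex (G : Finset (Finset V)) : Prop :=
  ∀ x ∈ G, x.Nonempty ∧ ∀ y, y ⊆ x → y.Nonempty → y ∈ G

/-- `w x = (-1)^(dim x)` where `dim x = |x| - 1`. -/
def w (x : Finset V) : ℤ := (-1) ^ (x.card - 1)

/-- Euler characteristic of a finite set of simplices: `χ(A) = Σ_{x ∈ A} w x`. -/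
def chi (A : Finset (Finset V)) : ℤ := ∑ x ∈ A, w x

/-- The star `U(x) = {y ∈ G : x ⊆ y}`. -/
def star (G : Finset (Finset V)) (x : Finset V) : Finset (Finset V) :=
  G.filter fun y => x ⊆ y

/-- The unit ball `B(x) = {z ∈ G : z ⊆ y for some y ∈ U(x)}` (closure of the star). -/
def ball (G : Finset (Finset V)) (x : Finset V) : Finset (Finset V) :=
  G.filter fun z => ∃ y ∈ G, x ⊆ y ∧ z ⊆ y

/-- The unit sphere `S(x) = B(x) \ U(x)`. -/
def sphere (G : Finset (Finset V)) (x : Finset V) : Finset (Finset V) :=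
  ball G x \ star G x

/-- The vertex set of `G`: those `v` with `{v} ∈ G`. -/
def verts (G : Finset (Finset V)) : Finset V :=
  (G.biUnion id).filter fun v => {v} ∈ G

/-- Contractibility, defined inductively: a single vertex complex is contractible, and `G`
is contractible if there is `x ∈ G` with both `S(x)` and `G \ U(x)` contractible. -/
inductive Contractible : Finset (Finset V) → Prop where
  | point (v : V) : Contractible ({({v} : Finset V)} : Finset (Finset V))
  | step (G : Finset (Finset V)) (x : Finset V) (hx : x ∈ G)
      (hS : Contractible (sphere G x)) (hG : Contractible (G \ star G x)) :
      Contractible G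

mutual
  /-- `G` is a `d`-manifold (`d ≥ 0`): every unit sphere `S(x)` is a `(d-1)`-sphere. -/
  inductive IsManifold : ℤ → Finset (Finset V) → Prop where
    | mk (d : ℤ) (G : Finset (Finset V)) (hd : 0 ≤ d)
        (h : ∀ x ∈ G, IsSphere (d - 1) (sphere G x)) : IsManifold d G

  /-- `d`-spheres: the empty complex is the `(-1)`-sphere, and a `d`-sphere is a
  `d`-manifold `G` such that `G \ U(x)` is contractible for some `x ∈ G`. -/
  inductive IsSphere : ℤ → Finset (Finset V) → Prop where
    | empty : IsSphere (-1) (∅ : Finset (Finset V))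
    | mk (d : ℤ) (G : Finset (Finset V)) (hm : IsManifold d G)
        (h : ∃ x ∈ G, Contractible (G \ star G x)) : IsSphere d G
end

/-- The f-function `f_G(t) = 1 + Σ_{k ≥ 0} f_k(G) t^(k+1) = 1 + Σ_{x ∈ G} t^|x|`. -/
noncomputable def fPoly (G : Finset (Finset V)) : Polynomial ℚ :=
  1 + ∑ x ∈ G, Polynomial.X ^ x.card

/-- `F_H(t) = ∫_0^t f_H(s) ds = t + Σ_{k ≥ 0} f_k(H) t^(k+2)/(k+2)`. -/
noncomputable def FPoly (H : Finset (Finset V)) : Polynomial ℚ :=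
  Polynomial.X +
    ∑ x ∈ H, Polynomial.C (((x.card : ℚ) + 1)⁻¹) * Polynomial.X ^ (x.card + 1)

/-- The join `G + H = G ∪ H ∪ {x ∪ y : x ∈ G, y ∈ H}`. -/
def joinC (G H : Finset (Finset V)) : Finset (Finset V) :=
  G ∪ H ∪ (G ×ˢ H).image fun p => p.1 ∪ p.2

/-- The barycentric refinement: simplices are the nonempty chains in `(G, ⊆)`. -/
def bary (G : Finset (Finset V)) : Finset (Finset (Finset V)) :=
  G.powerset.filter fun c => c.Nonempty ∧ ∀ x ∈ c, ∀ y ∈ c, x ⊆ y ∨ y ⊆ x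

/-- `f` is locally injective: distinct vertices of a common simplex have distinct values. -/
def LocallyInjective (G : Finset (Finset V)) (f : V → ℤ) : Prop :=
  ∀ x ∈ G, ∀ v ∈ x, ∀ u ∈ x, v ≠ u → f v ≠ f u

lemma w_insert {t : Finset V} {v : V} (ht : t.Nonempty) (hv : v ∉ t) :
    w (insert v t) = -w t := by
  obtain ⟨n, hn⟩ := Nat.exists_eq_succ_of_ne_zero ht.card_pos.ne'
  simp [w, card_insert_of_notMem hv, hn, pow_succ]

/-- Toggling `v` pairs off the simplices other than `{v}` with opposite weights. -/
lemma chi_eq_one_of_cone {s : Finset (Finset V)} {v : V} (hs : IsComplex s) (hne : s.Nonempty)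
    (hcone : ∀ t ∈ s, insert v t ∈ s) : chi s = 1 := by
  have hv : {v} ∈ s := by
    obtain ⟨t, ht⟩ := hne
    exact (hs _ (hcone t ht)).2 _ (by simp) (singleton_nonempty v)
  have erase_nonempty {t} (ht : t ∈ s.erase {v}) (hvt : v ∈ t) : (t.erase v).Nonempty := by
    rw [nonempty_iff_ne_empty, Ne, erase_eq_empty_iff]
    exact fun h => h.elim (hs t (mem_of_mem_erase ht)).1.ne_empty (ne_of_mem_erase ht)
  have hrest : ∑ t ∈ s.erase {v}, w t = 0 := by
    refine sum_involution (fun t _ => if v ∈ t then t.erase v else insert v t) ?_ ?_ ?_ ?_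
    · intro t ht
      by_cases hvt : v ∈ t
      · have := w_insert (erase_nonempty ht hvt) (notMem_erase v t)
        rw [insert_erase hvt] at this
        simp [hvt, this]
      · simp [hvt, w_insert (hs t (mem_of_mem_erase ht)).1 hvt]
    · intro t _ _
      split_ifs with hvt
      · exact ne_of_mem_of_not_mem' hvt (notMem_erase v t) |>.symm
      · exact ne_of_mem_of_not_mem' (mem_insert_self v t) hvt
    · intro t ht
      have ht' := mem_of_mem_erase ht
      split_ifs with hvt
      · exact mem_erase.2 ⟨fun h => notMem_erase v t (h ▸ mem_singleton_self v),
          (hs t ht').2 _ (erase_subset v t) (erase_nonempty ht hvt)⟩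
      · refine mem_erase.2 ⟨fun h => ?_, hcone t ht'⟩
        obtain ⟨u, hu⟩ := (hs t ht').1
        have : u ∈ ({v} : Finset V) := h ▸ mem_insert_of_mem hu
        exact hvt (mem_singleton.1 this ▸ hu)
    · intro t _
      by_cases hvt : v ∈ t <;> simp [hvt]
  rw [chi, ← add_sum_erase s w hv, hrest]
  simp [w]

section

variable {G : Finset (Finset V)}

lemma IsComplex.ball (hG : IsComplex G) (x : Finset V) : IsComplex (ball G x) := by
  intro z hz
  obtain ⟨hzG, y, hyG, hxy, hzy⟩ := mem_filter.1 hz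
  exact ⟨(hG z hzG).1, fun t htz ht =>
    mem_filter.2 ⟨(hG z hzG).2 t htz ht, y, hyG, hxy, htz.trans hzy⟩⟩

lemma IsComplex.filter_subset (hG : IsComplex G) (z : Finset V) :
    IsComplex (G.filter (· ⊆ z)) := by
  intro y hy
  obtain ⟨hyG, hyz⟩ := mem_filter.1 hy
  exact ⟨(hG y hyG).1, fun t hty ht => mem_filter.2 ⟨(hG y hyG).2 t hty ht, hty.trans hyz⟩⟩

lemma IsComplex.sphere (hG : IsComplex G) (x : Finset V) : IsComplex (sphere G x) := by
  intro z hz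
  obtain ⟨hzB, hzU⟩ := mem_sdiff.1 hz
  refine ⟨(hG.ball x z hzB).1, fun t htz ht => mem_sdiff.2 ⟨(hG.ball x z hzB).2 t htz ht, ?_⟩⟩
  exact fun htU => hzU (mem_filter.2 ⟨(mem_filter.1 hzB).1, (mem_filter.1 htU).2.trans htz⟩)

lemma IsComplex.sdiff_star (hG : IsComplex G) (x : Finset V) : IsComplex (G \ star G x) := by
  intro z hz
  obtain ⟨hzG, hzU⟩ := mem_sdiff.1 hz
  refine ⟨(hG z hzG).1, fun t htz ht => mem_sdiff.2 ⟨(hG z hzG).2 t htz ht, ?_⟩⟩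
  exact fun htU => hzU (mem_filter.2 ⟨hzG, (mem_filter.1 htU).2.trans htz⟩)

lemma chi_ball (hG : IsComplex G) {x : Finset V} (hx : x ∈ G) : chi (ball G x) = 1 := by
  obtain ⟨v, hv⟩ := (hG x hx).1
  have hxB : x ∈ ball G x := mem_filter.2 ⟨hx, x, hx, subset_rfl, subset_rfl⟩
  refine chi_eq_one_of_cone (v := v) (hG.ball x) ⟨x, hxB⟩ ?_
  intro t ht
  obtain ⟨-, y, hyG, hxy, hty⟩ := mem_filter.1 ht
  have hvty : insert v t ⊆ y := insert_subset (hxy hv) hty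
  exact mem_filter.2 ⟨(hG y hyG).2 _ hvty (insert_nonempty v t), y, hyG, hxy, hvty⟩

lemma chi_filter_subset (hG : IsComplex G) {z : Finset V} (hz : z ∈ G) :
    chi (G.filter (· ⊆ z)) = 1 := by
  obtain ⟨v, hv⟩ := (hG z hz).1
  refine chi_eq_one_of_cone (v := v) (hG.filter_subset z) ⟨z, mem_filter.2 ⟨hz, subset_rfl⟩⟩ ?_
  intro t ht
  have hvtz : insert v t ⊆ z := insert_subset hv (mem_filter.1 ht).2
  exact mem_filter.2 ⟨(hG z hz).2 _ hvtz (insert_nonempty v t), hvtz⟩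

lemma chi_star (hG : IsComplex G) {x : Finset V} (hx : x ∈ G) :
    chi (star G x) = 1 - chi (sphere G x) := by
  have hUB : star G x ⊆ ball G x := fun y hy =>
    mem_filter.2 ⟨filter_subset _ _ hy, y, filter_subset _ _ hy, (mem_filter.1 hy).2, subset_rfl⟩
  have hsplit := sum_sdiff hUB (f := w)
  rw [← chi_ball hG hx, chi, chi, chi, sphere, ← hsplit]
  ring

lemma chi_sdiff_star_add_chi_star (x : Finset V) :
    chi (G \ star G x) + chi (star G x) = chi G :=
  sum_sdiff (filter_subset _ _)

lemma Contractible.chi_eq_one (h : Contractible G) (hG : IsComplex G) : chi G = 1 := by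
  induction h with
  | point v => simp [chi, w]
  | step G x hx _ _ ihS ihG =>
    rw [← chi_sdiff_star_add_chi_star x, ihG (hG.sdiff_star x), chi_star hG hx,
      ihS (hG.sphere x)]
    ring

-- `G` is rebound in each statement because it changes along the mutual recursion.
mutual

theorem IsManifold.chi_star {d : ℤ} {G : Finset (Finset V)} (h : IsManifold d G)
    (hG : IsComplex G) {x : Finset V} (hx : x ∈ G) : chi (star G x) = d.negOnePow :=
  match h with
  | .mk _ _ _ hS => by
    rw [chi_star hG hx, (hS x hx).chi_eq (hG.sphere x), Int.negOnePow_sub]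
    simp

theorem IsSphere.chi_eq {d : ℤ} {G : Finset (Finset V)} (h : IsSphere d G)
    (hG : IsComplex G) : chi G = 1 + d.negOnePow :=
  match h with
  | .empty => by simp [chi]
  | .mk _ _ hm ⟨x, hx, hc⟩ => by
    rw [← chi_sdiff_star_add_chi_star x, hc.chi_eq_one (hG.sdiff_star x), hm.chi_star hG hx]

end

lemma sum_w_mul_chi_star (hG : IsComplex G) : ∑ x ∈ G, w x * chi (star G x) = chi G := by
  calc ∑ x ∈ G, w x * chi (star G x)
      = ∑ x ∈ G, ∑ y ∈ G, if x ⊆ y then w x * w y else 0 := by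
        simp only [chi, star, mul_sum, sum_filter, mul_ite, mul_zero]
    _ = ∑ y ∈ G, chi (G.filter (· ⊆ y)) * w y := by
        rw [sum_comm]
        simp only [chi, sum_mul, sum_filter, ite_mul, zero_mul]
    _ = chi G := by
        rw [chi]
        exact sum_congr rfl fun y hy => by rw [chi_filter_subset hG hy, one_mul]

end

/-- every odd-dimensional discrete manifold has zero Euler characteristic. -/
theorem chi_eq_zero_of_odd_manifold {V : Type} [DecidableEq V] (d : ℤ) (hd : Odd d)
    (G : Finset (Finset V)) (hG : IsComplex G) (hm : IsManifold d G) :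
    chi G = 0 := by
  have hstar : ∀ x ∈ G, chi (star G x) = -1 := fun x hx => by
    rw [hm.chi_star hG hx, Int.negOnePow_odd d hd, Units.val_neg, Units.val_one]
  have hneg : chi G = -chi G :=
    calc chi G = ∑ x ∈ G, w x * chi (star G x) := (sum_w_mul_chi_star hG).symm
      _ = ∑ x ∈ G, -w x := sum_congr rfl fun x hx => by rw [hstar x hx, mul_neg_one]
      _ = -chi G := sum_neg_distrib w
  omega

end SphereFormula
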